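/- arXiv:2505.19460 — 5 statements merged into one kernel-verified Lean document; each statement's English description precedes it below -/
import Mathlib

section
/- Let a_i be the telephone numbers defined by a_0 = a_1 = 1 and a_i = a_{i-1} + (i-1)a_{i-2} for i ≥ 2. Define b_n = a_{⌊(n+1)/2⌋} / ⌊n/2⌋! (as a rational number). Then for every even n ≥ 4, b_n = 2(b_{n-2} + b_{n-4})/n. -/
/-- The telephone numbers: `a 0 = a 1 = 1`, `a (i+2) = a (i+1) + (i+1) * a i`. -/
def telephone : ℕ → ℕ
  | 0 => 1
  | 1 => 1
  | (i + 2) => telephone (i + 1) + (i + 1) * telephone i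

/-- `b n = a_{⌊(n+1)/2⌋} / ⌊n/2⌋!` as a rational number. -/
noncomputable def bSeq (n : ℕ) : ℚ := (telephone ((n + 1) / 2) : ℚ) / (Nat.factorial (n / 2) : ℚ)

theorem stmt_0 (n : ℕ) (hn : 4 ≤ n) (heven : Even n) :
    bSeq n = 2 * (bSeq (n - 2) + bSeq (n - 4)) / (n : ℚ) := by
  obtain ⟨m, rfl⟩ := heven
  obtain ⟨k, rfl⟩ : ∃ k, m = k + 2 := ⟨m - 2, by omega⟩
  have h0 : (k + 2) + (k + 2) = 2 * k + 4 := by ring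
  have e1 : ((2 * k + 4) + 1) / 2 = k + 2 := by omega
  have e2 : (2 * k + 4) / 2 = k + 2 := by omega
  have e3 : 2 * k + 4 - 2 = 2 * k + 2 := by omega
  have e4 : ((2 * k + 2) + 1) / 2 = k + 1 := by omega
  have e5 : (2 * k + 2) / 2 = k + 1 := by omega
  have e6 : 2 * k + 4 - 4 = 2 * k := by omega
  have e7 : ((2 * k) + 1) / 2 = k := by omega
  have e8 : (2 * k) / 2 = k := by omega
  rw [h0]
  unfold bSeq
  rw [e1, e2, e3, e4, e5, e6, e7, e8]
  have ht : telephone (k + 2) = telephone (k + 1) + (k + 1) * telephone k := rfl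
  have hf2 : Nat.factorial (k + 2) = (k + 2) * ((k + 1) * Nat.factorial k) := by
    simp [Nat.factorial]
  have hf1 : Nat.factorial (k + 1) = (k + 1) * Nat.factorial k := by
    simp [Nat.factorial]
  have hk : (Nat.factorial k : ℚ) ≠ 0 := by positivity
  have hk1 : ((k : ℚ) + 1) ≠ 0 := by positivity
  have hk2 : ((k : ℚ) + 2) ≠ 0 := by positivity
  have hn0 : ((2 * k + 4 : ℕ) : ℚ) ≠ 0 := by positivity
  rw [ht, hf2, hf1]
  push_cast
  field_simp
  ring
end

section
/- Let a_i be the telephone numbers defined by a_0 = a_1 = 1 and a_i = a_{i-1} + (i-1)a_{i-2} for i ≥ 2. Define b_n = a_{⌊(n+1)/2⌋} / ⌊n/2⌋! (as a rational number). Then for every odd n ≥ 5, b_n = 2(b_{n-2} + b_{n-3} + b_{n-4})/(n-1). -/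
/-! Writing `n = 2m + 5`, we have `2 / (n - 1) = 1 / (m + 2)`, and the three terms on the right are
`a_{m+2}/(m+1)! + a_{m+1}/(m+1)! + a_{m+1}/m! = (a_{m+2} + (m+2) a_{m+1})/(m+1)!`, which is
`a_{m+3}/(m+1)!` by the recurrence. -/

theorem telephone_add_two (i : ℕ) :
    telephone (i + 2) = telephone (i + 1) + (i + 1) * telephone i := rfl

theorem bSeq_two_mul (k : ℕ) : bSeq (2 * k) = telephone k / k.factorial := by
  simp only [bSeq]
  rw [show (2 * k + 1) / 2 = k by omega, show 2 * k / 2 = k by omega]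

theorem bSeq_two_mul_add_one (k : ℕ) : bSeq (2 * k + 1) = telephone (k + 1) / k.factorial := by
  simp only [bSeq]
  rw [show (2 * k + 1 + 1) / 2 = k + 1 by omega, show (2 * k + 1) / 2 = k by omega]

theorem bSeq_add_bSeq_add_bSeq (m : ℕ) :
    bSeq (2 * m + 3) + bSeq (2 * m + 2) + bSeq (2 * m + 1) =
      telephone (m + 3) / (m + 1).factorial := by
  rw [telephone_add_two (m + 1), show 2 * m + 3 = 2 * (m + 1) + 1 by ring,
    show 2 * m + 2 = 2 * (m + 1) by ring, bSeq_two_mul_add_one, bSeq_two_mul, bSeq_two_mul_add_one,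
    Nat.factorial_succ]
  field_simp
  push_cast
  ring

theorem stmt_1 (n : ℕ) (hn : 5 ≤ n) (hodd : Odd n) :
    bSeq n = 2 * (bSeq (n - 2) + bSeq (n - 3) + bSeq (n - 4)) / ((n : ℚ) - 1) := by
  obtain ⟨m, rfl⟩ : ∃ m, n = 2 * (m + 2) + 1 := by
    obtain ⟨k, rfl⟩ := hodd
    exact ⟨k - 2, by omega⟩
  rw [show 2 * (m + 2) + 1 - 2 = 2 * m + 3 by omega, show 2 * (m + 2) + 1 - 3 = 2 * m + 2 by omega,
    show 2 * (m + 2) + 1 - 4 = 2 * m + 1 by omega, bSeq_add_bSeq_add_bSeq, bSeq_two_mul_add_one,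
    Nat.factorial_succ (m + 1)]
  push_cast
  field_simp
  ring
end

section
/- Let n ≥ 2 and let α = (α_1, ..., α_s) be a partition of n with at least two parts and not all parts equal to 1 (i.e., α ≠ (n) and α ≠ (1,...,1)). For 1 ≤ i ≤ n let ℓ_i denote the number of parts of α equal to i. Then ⌊ℓ_1/2⌋ + ⌊ℓ_2/2⌋ + ... + ⌊ℓ_n/2⌋ ≤ ⌊(n-2)/2⌋. -/
theorem stmt_2 (n : ℕ) (hn : 2 ≤ n) (α : Nat.Partition n)
    (hne1 : α.parts ≠ {n}) (hne2 : α.parts ≠ Multiset.replicate n 1) :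
    ∑ i ∈ Finset.Icc 1 n, (Multiset.count i α.parts) / 2 ≤ (n - 2) / 2 := by
  classical
  set L : ℕ → ℕ := fun i => Multiset.count i α.parts with hLdef
  have hsub : α.parts.toFinset ⊆ Finset.Icc 1 n := by
    intro i hi
    rw [Multiset.mem_toFinset] at hi
    refine Finset.mem_Icc.mpr ⟨α.parts_pos hi, ?_⟩
    calc i ≤ α.parts.sum := Multiset.single_le_sum (fun _ _ => Nat.zero_le _) _ hi
      _ = n := α.parts_sum
  have hsum : ∑ i ∈ Finset.Icc 1 n, i * L i = n := by
    have h := Finset.sum_multiset_count α.parts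
    rw [α.parts_sum] at h
    have h2 : ∑ i ∈ α.parts.toFinset, i * L i = n := by
      refine Eq.trans ?_ h.symm
      exact Finset.sum_congr rfl fun x _ => by rw [smul_eq_mul, mul_comm]
    have heq : ∑ i ∈ α.parts.toFinset, i * L i = ∑ i ∈ Finset.Icc 1 n, i * L i := by
      refine Finset.sum_subset hsub (fun x _ hx => ?_)
      have : L x = 0 := Multiset.count_eq_zero_of_notMem (by simpa using hx)
      rw [this, mul_zero]
    exact heq.symm.trans h2
  set S : ℕ := ∑ i ∈ Finset.Icc 1 n, L i / 2 with hSdef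
  set T : ℕ := ∑ i ∈ Finset.Icc 1 n, i * (L i / 2) with hTdef
  have hT : T * 2 ≤ n := by
    have h : T * 2 ≤ ∑ i ∈ Finset.Icc 1 n, i * L i := by
      rw [hTdef, Finset.sum_mul]
      refine Finset.sum_le_sum fun i _ => ?_
      rw [mul_assoc]
      exact Nat.mul_le_mul_left _ (Nat.div_mul_le_self _ 2)
    omega
  have hS : S ≤ T := by
    refine Finset.sum_le_sum fun i hi => ?_
    have h1 : 1 ≤ i := (Finset.mem_Icc.mp hi).1
    exact Nat.le_mul_of_pos_left _ h1
  rw [Nat.le_div_iff_mul_le (by norm_num : 0 < 2)]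
  by_contra hc
  push_neg at hc
  have hTS : T = S := by omega
  have hsplit : ∑ i ∈ Finset.Icc 1 n, (i - 1) * (L i / 2) + S = T := by
    rw [hSdef, hTdef, ← Finset.sum_add_distrib]
    refine Finset.sum_congr rfl fun i hi => ?_
    have h1 : 1 ≤ i := (Finset.mem_Icc.mp hi).1
    obtain ⟨j, rfl⟩ := Nat.exists_eq_add_of_le h1
    have hj : 1 + j - 1 = j := by omega
    rw [hj]
    ring
  have hzsum : ∑ i ∈ Finset.Icc 1 n, (i - 1) * (L i / 2) = 0 := by omega
  have hzero : ∀ i ∈ Finset.Icc 1 n, (i - 1) * (L i / 2) = 0 :=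
    Finset.sum_eq_zero_iff.mp hzsum
  have h1mem : (1 : ℕ) ∈ Finset.Icc 1 n := Finset.mem_Icc.mpr ⟨le_refl 1, by omega⟩
  have hS1 : S = L 1 / 2 := by
    rw [hSdef]
    refine Finset.sum_eq_single_of_mem 1 h1mem fun i hi hne => ?_
    have h1 : 1 ≤ i := (Finset.mem_Icc.mp hi).1
    have h2 : 1 ≤ i - 1 := by omega
    have h3 := hzero i hi
    rcases Nat.mul_eq_zero.mp h3 with h4 | h4
    · omega
    · exact h4
  have hL1 : n - 1 ≤ L 1 := by omega
  have hdec : L 1 + ∑ i ∈ (Finset.Icc 1 n).erase 1, i * L i = n := by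
    have h5 := Finset.add_sum_erase (Finset.Icc 1 n) (fun i => i * L i) h1mem
    simp only [one_mul] at h5
    omega
  have hsumrest : ∑ j ∈ (Finset.Icc 1 n).erase 1, j * L j ≤ 1 := by omega
  have hrest : ∀ i ∈ (Finset.Icc 1 n).erase 1, i * L i = 0 := by
    intro i hi
    have hle : i * L i ≤ ∑ j ∈ (Finset.Icc 1 n).erase 1, j * L j :=
      Finset.single_le_sum (f := fun j => j * L j) (fun _ _ => Nat.zero_le _) hi
    have h2 : 2 ≤ i := by
      have ha := (Finset.mem_Icc.mp (Finset.mem_of_mem_erase hi)).1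
      have hb := Finset.ne_of_mem_erase hi
      omega
    rcases Nat.eq_zero_or_pos (L i) with h0 | h0
    · rw [h0, mul_zero]
    · exfalso
      have h4 : 2 ≤ i * L i := by
        calc 2 ≤ i := h2
          _ = i * 1 := (mul_one i).symm
          _ ≤ i * L i := Nat.mul_le_mul_left _ h0
      omega
  have hall1 : ∀ x ∈ α.parts, x = 1 := by
    intro x hx
    have hxI : x ∈ Finset.Icc 1 n := hsub (Multiset.mem_toFinset.mpr hx)
    by_contra hx1
    have hxe : x ∈ (Finset.Icc 1 n).erase 1 := Finset.mem_erase.mpr ⟨hx1, hxI⟩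
    have h0 := hrest x hxe
    have hLx : 1 ≤ L x := Multiset.one_le_count_iff_mem.mpr hx
    have h1 : 1 ≤ x := (Finset.mem_Icc.mp hxI).1
    have : 1 ≤ x * L x := Nat.mul_pos h1 hLx
    omega
  apply hne2
  have hcard : α.parts = Multiset.replicate (Multiset.card α.parts) 1 :=
    (Multiset.eq_replicate_card).mpr hall1
  have hcn : Multiset.card α.parts = n := by
    have hps := α.parts_sum
    rw [hcard] at hps
    simpa using hps
  rw [hcard, hcn]
end

section
/- Define L(n, k) as in the recursion L(0,k) = L(1,k) = 1 and L(n,k) = 1 + k + Σ_{α ⊢ n, α ≠ (n), (1^n)} Σ_{m=0}^{k-1} Π_i L(ℓ_i(α), m). Then for every fixed n ≥ 1, there exist positive constants c, C such that c·k^{⌊n/2⌋} ≤ L(n, k) ≤ C·k^{⌊n/2⌋} for all k ≥ 1, i.e., L(n, k) = Θ(k^{⌊n/2⌋}) as k → ∞. -/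
open Finset

lemma part_sum_count (n : ℕ) (α : Nat.Partition n) :
    ∑ i ∈ Finset.Icc 1 α.parts.sup, i * Multiset.count i α.parts = n := by
  have h := Finset.sum_multiset_map_count α.parts id
  rw [Multiset.map_id] at h
  rw [α.parts_sum] at h
  have h2 : ∑ m ∈ α.parts.toFinset, Multiset.count m α.parts • id m
      = ∑ m ∈ α.parts.toFinset, m * Multiset.count m α.parts := by
    refine Finset.sum_congr rfl fun x _ => ?_
    simp [mul_comm]
  rw [h2] at h
  refine Eq.trans ?_ h.symm
  refine (Finset.sum_subset ?_ ?_).symm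
  · intro i hi
    rw [Multiset.mem_toFinset] at hi
    exact Finset.mem_Icc.mpr ⟨α.parts_pos hi, Multiset.le_sup hi⟩
  · intro i _ hi
    rw [Multiset.mem_toFinset] at hi
    rw [Multiset.count_eq_zero_of_notMem hi, mul_zero]

lemma count_one_bound (n : ℕ) (α : Nat.Partition n)
    (h : α.parts ≠ Multiset.replicate n 1) :
    Multiset.count 1 α.parts + 2 ≤ n := by
  classical
  set t := α.parts.filter (fun x => ¬ x = 1) with ht
  have hsplit : α.parts.filter (fun x => x = 1) + t = α.parts :=
    Multiset.filter_add_not _ _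
  have hrep : α.parts.filter (fun x => x = 1) = Multiset.replicate (Multiset.count 1 α.parts) 1 := by
    exact Multiset.filter_eq' _ _
  have hsum : Multiset.count 1 α.parts + t.sum = n := by
    have := congrArg Multiset.sum hsplit
    rw [Multiset.sum_add, hrep, Multiset.sum_replicate, smul_eq_mul, mul_one, α.parts_sum] at this
    exact this
  rcases eq_or_ne t 0 with h0 | h0
  · exfalso
    apply h
    have hts : t.sum = 0 := by rw [h0]; rfl
    rw [← hsplit, h0, add_zero, hrep]
    congr 1
    omega
  · have hcard : 0 < Multiset.card t := by
      rwa [Multiset.card_pos]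
    have h2 : 2 ≤ t.sum := by
      obtain ⟨x, hx⟩ := Multiset.exists_mem_of_ne_zero h0
      have hx1 : ¬ x = 1 := (Multiset.mem_filter.mp hx).2
      have hxp : 0 < x := α.parts_pos (Multiset.mem_of_mem_filter hx)
      calc 2 ≤ x := by omega
        _ ≤ t.sum := Multiset.le_sum_of_mem hx
    omega

lemma exists_two_part (n : ℕ) (α : Nat.Partition n)
    (h : α.parts ≠ Multiset.replicate n 1) : ∃ p ∈ α.parts, 2 ≤ p := by
  by_contra hc
  push_neg at hc
  apply h
  have hall : ∀ p ∈ α.parts, p = 1 := by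
    intro p hp
    have := α.parts_pos hp
    have := hc p hp
    omega
  have hrep : α.parts = Multiset.replicate (Multiset.card α.parts) 1 :=
    Multiset.eq_replicate_card.mpr hall
  have hcard : Multiset.card α.parts = n := by
    have := α.parts_sum
    rw [hrep] at this
    rwa [Multiset.sum_replicate, smul_eq_mul, mul_one] at this
  rw [hrep, hcard]

lemma exponent_bound (n : ℕ) (α : Nat.Partition n)
    (h : α.parts ≠ Multiset.replicate n 1) :
    (∑ i ∈ Finset.Icc 1 α.parts.sup, Multiset.count i α.parts / 2) + 1 ≤ n / 2 := by
  obtain ⟨p, hp, hp2⟩ := exists_two_part n α h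
  have hps : p ∈ Finset.Icc 1 α.parts.sup :=
    Finset.mem_Icc.mpr ⟨by omega, Multiset.le_sup hp⟩
  have hcp : 1 ≤ Multiset.count p α.parts := Multiset.one_le_count_iff_mem.mpr hp
  have key : ∑ i ∈ Finset.Icc 1 α.parts.sup,
      (2 * (Multiset.count i α.parts / 2) + if i = p then 2 else 0)
      ≤ ∑ i ∈ Finset.Icc 1 α.parts.sup, i * Multiset.count i α.parts := by
    refine Finset.sum_le_sum fun i hi => ?_
    have h1i : 1 ≤ i := (Finset.mem_Icc.mp hi).1
    by_cases hip : i = p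
    · subst hip
      rw [if_pos rfl]
      have h2 : 2 * Multiset.count i α.parts ≤ i * Multiset.count i α.parts :=
        Nat.mul_le_mul_right _ hp2
      omega
    · simp only [if_neg hip]
      have h2 : 1 * Multiset.count i α.parts ≤ i * Multiset.count i α.parts :=
        Nat.mul_le_mul_right _ h1i
      omega
  rw [Finset.sum_add_distrib, Finset.sum_ite_eq' _ p (fun _ => 2), if_pos hps,
    ← Finset.mul_sum, part_sum_count n α] at key
  rw [Nat.le_div_iff_mul_le (by norm_num : 0 < 2)]
  omega

lemma count_lt (n : ℕ) (α : Nat.Partition n) (hn : 2 ≤ n)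
    (h : α.parts ≠ Multiset.replicate n 1) (i : ℕ) :
    Multiset.count i α.parts < n := by
  rcases Nat.lt_or_ge i 1 with hi | hi
  · interval_cases i
    have : (0:ℕ) ∉ α.parts := fun hc => absurd (α.parts_pos hc) (by omega)
    rw [Multiset.count_eq_zero_of_notMem this]
    omega
  rcases Nat.lt_or_ge i 2 with hi2 | hi2
  · have : i = 1 := by omega
    subst this
    have := count_one_bound n α h
    omega
  by_cases him : i ∈ Finset.Icc 1 α.parts.sup
  · have hle : i * Multiset.count i α.parts ≤ n :=
      le_trans (Finset.single_le_sum (f := fun j => j * Multiset.count j α.parts)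
        (fun _ _ => Nat.zero_le _) him) (le_of_eq (part_sum_count n α))
    have h2 : 2 * Multiset.count i α.parts ≤ i * Multiset.count i α.parts :=
      Nat.mul_le_mul_right _ hi2
    omega
  · have : i ∉ α.parts := fun hc =>
      him (Finset.mem_Icc.mpr ⟨by omega, Multiset.le_sup hc⟩)
    rw [Multiset.count_eq_zero_of_notMem this]
    omega

theorem stmt_9 (L : ℕ → ℕ → ℕ)
    (h0 : ∀ k, L 0 k = 1) (h1 : ∀ k, L 1 k = 1)
    (hrec : ∀ n k, 2 ≤ n → L n k = 1 + k +
      ∑ α ∈ Finset.univ.filter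
          (fun α : Nat.Partition n => α.parts ≠ {n} ∧ α.parts ≠ Multiset.replicate n 1),
        ∑ m ∈ Finset.range k,
          ∏ i ∈ Finset.Icc 1 (α.parts.sup), L (Multiset.count i α.parts) m)
    (n : ℕ) (hn : 1 ≤ n) :
    ∃ c C : ℝ, 0 < c ∧ 0 < C ∧ ∀ k : ℕ, 1 ≤ k →
      c * (k : ℝ) ^ (n / 2) ≤ (L n k : ℝ) ∧ (L n k : ℝ) ≤ C * (k : ℝ) ^ (n / 2) := by
  classical
  have hL1 : ∀ j k, 1 ≤ L j k := by
    intro j k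
    match j with
    | 0 => rw [h0]
    | 1 => rw [h1]
    | (j+2) => rw [hrec (j+2) k (by omega)]; omega
  have main : ∀ N : ℕ, ∃ C : ℕ, 1 ≤ C ∧ ∀ j ≤ N, ∀ k, 1 ≤ k →
      k ^ (j / 2) ≤ C * L j k ∧ L j k ≤ C * k ^ (j / 2) := by
    intro N
    induction N with
    | zero =>
      refine ⟨1, le_refl 1, ?_⟩
      intro j hj k hk
      interval_cases j
      simp [h0 k]
    | succ N ih =>
      obtain ⟨C, hC1, hC⟩ := ih
      rcases Nat.lt_or_ge (N+1) 2 with hsmall | hbig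
      · refine ⟨C, hC1, ?_⟩
        intro j hj k hk
        rcases Nat.lt_or_ge j (N+1) with hj' | hj'
        · exact hC j (by omega) k hk
        · have hje : j = 1 := by omega
          subst hje
          constructor <;> simp [h1 k] <;> omega
      · set n' := N + 1 with hn'
        have hL0 : ∀ j, L j 0 = 1 := by
          intro j
          match j with
          | 0 => rw [h0]
          | 1 => rw [h1]
          | (j+2) => rw [hrec (j+2) 0 (by omega)]; simp
        have hCub : ∀ j, j ≤ N → ∀ m : ℕ, L j m ≤ C * (m+1) ^ (j / 2) := by
          intro j hj m
          rcases Nat.eq_zero_or_pos m with rfl | hm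
          · rw [hL0 j]
            calc 1 ≤ C := hC1
              _ ≤ C * 1 ^ (j/2) := by simp
          · calc L j m ≤ C * m ^ (j/2) := (hC j hj m hm).2
              _ ≤ C * (m+1) ^ (j/2) :=
                Nat.mul_le_mul_left _ (Nat.pow_le_pow_left (by omega) _)
        set P := Fintype.card (Nat.Partition n') with hP
        set S := Finset.univ.filter
          (fun α : Nat.Partition n' => α.parts ≠ {n'} ∧ α.parts ≠ Multiset.replicate n' 1)
          with hS
        -- upper bound for n'
        have hup : ∀ k, 1 ≤ k → L n' k ≤ (2 + P * C ^ n') * k ^ (n' / 2) := by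
          intro k hk
          have hk1 : 1 ≤ k ^ (n'/2) := Nat.one_le_pow _ _ (by omega)
          have hkk : k ≤ k ^ (n'/2) := by
            calc k = k ^ 1 := (pow_one k).symm
              _ ≤ k ^ (n'/2) := Nat.pow_le_pow_right (by omega) (by omega)
          rw [hrec n' k hbig]
          have hterm : ∀ α ∈ S,
              (∑ m ∈ Finset.range k, ∏ i ∈ Finset.Icc 1 (α.parts.sup),
                L (Multiset.count i α.parts) m) ≤ C ^ n' * k ^ (n'/2) := by
            intro α hα
            have hα2 : α.parts ≠ Multiset.replicate n' 1 := (Finset.mem_filter.mp hα).2.2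
            have hexp := exponent_bound n' α hα2
            have hsup : α.parts.sup ≤ n' := by
              apply Multiset.sup_le.mpr
              intro b hb
              calc b ≤ α.parts.sum := Multiset.le_sum_of_mem hb
                _ = n' := α.parts_sum
            have hprod : ∀ m ∈ Finset.range k,
                (∏ i ∈ Finset.Icc 1 α.parts.sup, L (Multiset.count i α.parts) m)
                  ≤ C ^ n' * k ^ (∑ i ∈ Finset.Icc 1 α.parts.sup,
                      Multiset.count i α.parts / 2) := by
              intro m hm
              have hmk : m + 1 ≤ k := Finset.mem_range.mp hm
              calc (∏ i ∈ Finset.Icc 1 α.parts.sup, L (Multiset.count i α.parts) m)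
                  ≤ ∏ i ∈ Finset.Icc 1 α.parts.sup,
                      C * (m+1) ^ (Multiset.count i α.parts / 2) := by
                    refine Finset.prod_le_prod (fun _ _ => Nat.zero_le _) fun i _ => ?_
                    refine hCub _ ?_ m
                    have := count_lt n' α hbig hα2 i
                    omega
                _ = (∏ _i ∈ Finset.Icc 1 α.parts.sup, C) *
                      ∏ i ∈ Finset.Icc 1 α.parts.sup,
                        (m+1) ^ (Multiset.count i α.parts / 2) := Finset.prod_mul_distrib
                _ = C ^ (Finset.Icc 1 α.parts.sup).card *
                      (m+1) ^ (∑ i ∈ Finset.Icc 1 α.parts.sup,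
                        Multiset.count i α.parts / 2) := by
                    rw [Finset.prod_const, Finset.prod_pow_eq_pow_sum]
                _ ≤ C ^ n' * k ^ (∑ i ∈ Finset.Icc 1 α.parts.sup,
                      Multiset.count i α.parts / 2) := by
                    refine Nat.mul_le_mul ?_ (Nat.pow_le_pow_left hmk _)
                    refine Nat.pow_le_pow_right (by omega) ?_
                    rw [Nat.card_Icc]
                    omega
            calc (∑ m ∈ Finset.range k, ∏ i ∈ Finset.Icc 1 (α.parts.sup),
                  L (Multiset.count i α.parts) m)
                ≤ ∑ _m ∈ Finset.range k, C ^ n' * k ^ (∑ i ∈ Finset.Icc 1 α.parts.sup,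
                    Multiset.count i α.parts / 2) := Finset.sum_le_sum hprod
              _ = C ^ n' * (k ^ (∑ i ∈ Finset.Icc 1 α.parts.sup,
                    Multiset.count i α.parts / 2) * k) := by
                  rw [Finset.sum_const, Finset.card_range, smul_eq_mul]; ring
              _ ≤ C ^ n' * k ^ (n'/2) := by
                  refine Nat.mul_le_mul_left _ ?_
                  calc (k ^ (∑ i ∈ Finset.Icc 1 α.parts.sup,
                        Multiset.count i α.parts / 2)) * k
                      = k ^ ((∑ i ∈ Finset.Icc 1 α.parts.sup,
                        Multiset.count i α.parts / 2) + 1) := (pow_succ k _).symm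
                    _ ≤ k ^ (n'/2) := Nat.pow_le_pow_right (by omega) hexp
          have hSsum : (∑ α ∈ S, ∑ m ∈ Finset.range k,
              ∏ i ∈ Finset.Icc 1 (α.parts.sup), L (Multiset.count i α.parts) m)
              ≤ P * (C ^ n' * k ^ (n'/2)) := by
            calc (∑ α ∈ S, ∑ m ∈ Finset.range k,
                ∏ i ∈ Finset.Icc 1 (α.parts.sup), L (Multiset.count i α.parts) m)
                ≤ S.card • (C ^ n' * k ^ (n'/2)) := Finset.sum_le_card_nsmul _ _ _ hterm
              _ = S.card * (C ^ n' * k ^ (n'/2)) := by rw [smul_eq_mul]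
              _ ≤ P * (C ^ n' * k ^ (n'/2)) := by
                  refine Nat.mul_le_mul_right _ ?_
                  rw [hP, ← Finset.card_univ]
                  exact Finset.card_filter_le _ _
          calc 1 + k + (∑ α ∈ S, ∑ m ∈ Finset.range k,
                ∏ i ∈ Finset.Icc 1 (α.parts.sup), L (Multiset.count i α.parts) m)
              ≤ k ^ (n'/2) + k ^ (n'/2) + P * (C ^ n' * k ^ (n'/2)) :=
                add_le_add (add_le_add hk1 hkk) hSsum
            _ = (2 + P * C ^ n') * k ^ (n'/2) := by ring
        -- lower bound for n'
        have hlowk : ∀ k : ℕ, k ≤ L n' k := by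
          intro k
          rw [hrec n' k hbig]
          omega
        have hlow : ∀ k, 1 ≤ k → k ^ (n'/2) ≤ (3 ^ n' * C) * L n' k := by
          intro k hk
          have hCL : 1 ≤ 3 ^ n' * C :=
            Nat.one_le_iff_ne_zero.mpr (by positivity)
          rcases Nat.lt_or_ge n' 3 with h3 | h3
          · have hD : n' / 2 = 1 := by omega
            rw [hD, pow_one]
            calc k ≤ L n' k := hlowk k
              _ ≤ 3 ^ n' * C * L n' k := Nat.le_mul_of_pos_left _ (by positivity)
          rcases Nat.lt_or_ge k 2 with hk2 | hk2
          · have hke : k = 1 := by omega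
            subst hke
            simp only [one_pow]
            calc 1 ≤ L n' 1 := hL1 n' 1
              _ ≤ 3 ^ n' * C * L n' 1 := Nat.le_mul_of_pos_left _ (by positivity)
          -- main case : k ≥ 2, n' ≥ 3, use partition (2,1^{n'-2})
          have hsum0 : (2 ::ₘ Multiset.replicate (n'-2) 1).sum = n' := by
            rw [Multiset.sum_cons, Multiset.sum_replicate, smul_eq_mul, mul_one]
            omega
          have hpos : ∀ {i : ℕ}, i ∈ (2 ::ₘ Multiset.replicate (n'-2) 1) → 0 < i := by
            intro i hi
            rcases Multiset.mem_cons.mp hi with rfl | hi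
            · omega
            · rw [Multiset.eq_of_mem_replicate hi]; omega
          set π : Nat.Partition n' := ⟨2 ::ₘ Multiset.replicate (n'-2) 1, hpos, hsum0⟩
            with hπ
          have hπparts : π.parts = 2 ::ₘ Multiset.replicate (n'-2) 1 := rfl
          have h2mem : (2:ℕ) ∈ π.parts := by rw [hπparts]; exact Multiset.mem_cons_self _ _
          have hπ1 : π.parts ≠ Multiset.replicate n' 1 := by
            intro hc
            have := Multiset.eq_of_mem_replicate (hc ▸ h2mem)
            omega
          have hπ2 : π.parts ≠ {n'} := by
            intro hc
            have hcard := congrArg Multiset.card hc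
            rw [hπparts, Multiset.card_cons, Multiset.card_replicate,
              Multiset.card_singleton] at hcard
            omega
          have hmem : π ∈ S :=
            Finset.mem_filter.mpr ⟨Finset.mem_univ _, hπ2, hπ1⟩
          have hcount1 : Multiset.count 1 π.parts = n' - 2 := by
            rw [hπparts, Multiset.count_cons_of_ne (by norm_num),
              Multiset.count_replicate]
            simp
          have hbig' : (∑ m ∈ Finset.range k, L (n'-2) m) ≤ L n' k := by
            rw [hrec n' k hbig, ← hS]
            have hstep1 : (∑ m ∈ Finset.range k, L (n'-2) m) ≤
                ∑ m ∈ Finset.range k, ∏ i ∈ Finset.Icc 1 (π.parts.sup),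
                  L (Multiset.count i π.parts) m := by
              refine Finset.sum_le_sum fun m _ => ?_
              have h1m : (1:ℕ) ∈ Finset.Icc 1 π.parts.sup :=
                Finset.mem_Icc.mpr ⟨le_refl 1,
                  le_trans (by omega) (Multiset.le_sup h2mem)⟩
              have := Finset.single_le_prod'
                (f := fun i => L (Multiset.count i π.parts) m)
                (fun i _ => hL1 _ _) h1m
              simpa only [hcount1] using this
            have hstep2 : (∑ m ∈ Finset.range k, ∏ i ∈ Finset.Icc 1 (π.parts.sup),
                L (Multiset.count i π.parts) m) ≤
                ∑ α ∈ S, ∑ m ∈ Finset.range k, ∏ i ∈ Finset.Icc 1 (α.parts.sup),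
                  L (Multiset.count i α.parts) m :=
              Finset.single_le_sum (f := fun α : Nat.Partition n' =>
                ∑ m ∈ Finset.range k, ∏ i ∈ Finset.Icc 1 (α.parts.sup),
                  L (Multiset.count i α.parts) m) (fun _ _ => Nat.zero_le _) hmem
            omega
          have hmid : (k - k/2) * (k/2) ^ ((n'-2)/2) ≤
              C * ∑ m ∈ Finset.range k, L (n'-2) m := by
            have hsub : Finset.Ico (k/2) k ⊆ Finset.range k := by
              intro m hm
              rw [Finset.mem_range]
              exact (Finset.mem_Ico.mp hm).2
            calc (k - k/2) * (k/2) ^ ((n'-2)/2)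
                = ∑ _m ∈ Finset.Ico (k/2) k, (k/2) ^ ((n'-2)/2) := by
                  rw [Finset.sum_const, Nat.card_Ico, smul_eq_mul]
              _ ≤ ∑ m ∈ Finset.Ico (k/2) k, C * L (n'-2) m := by
                  refine Finset.sum_le_sum fun m hm => ?_
                  obtain ⟨hm1, hm2⟩ := Finset.mem_Ico.mp hm
                  have hm0 : 1 ≤ m := le_trans (by omega : 1 ≤ k/2) hm1
                  calc (k/2) ^ ((n'-2)/2) ≤ m ^ ((n'-2)/2) :=
                      Nat.pow_le_pow_left hm1 _
                    _ ≤ C * L (n'-2) m := (hC (n'-2) (by omega) m hm0).1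
              _ = C * ∑ m ∈ Finset.Ico (k/2) k, L (n'-2) m :=
                  (Finset.mul_sum _ _ _).symm
              _ ≤ C * ∑ m ∈ Finset.range k, L (n'-2) m :=
                  Nat.mul_le_mul_left _ (Finset.sum_le_sum_of_subset hsub)
          have e1 : n'/2 = (n'-2)/2 + 1 := by omega
          have hk3 : k ≤ 3 * (k/2) := by omega
          calc k ^ (n'/2) ≤ (3 * (k/2)) ^ (n'/2) := Nat.pow_le_pow_left hk3 _
            _ = 3 ^ (n'/2) * (k/2) ^ (n'/2) := mul_pow _ _ _
            _ = 3 ^ (n'/2) * ((k/2) ^ ((n'-2)/2) * (k/2)) := by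
                congr 1
                rw [e1, pow_succ]
            _ ≤ 3 ^ (n'/2) * ((k/2) ^ ((n'-2)/2) * (k - k/2)) :=
                Nat.mul_le_mul_left _ (Nat.mul_le_mul_left _ (by omega))
            _ = 3 ^ (n'/2) * ((k - k/2) * (k/2) ^ ((n'-2)/2)) := by ring
            _ ≤ 3 ^ (n'/2) * (C * ∑ m ∈ Finset.range k, L (n'-2) m) :=
                Nat.mul_le_mul_left _ hmid
            _ ≤ 3 ^ (n'/2) * (C * L n' k) :=
                Nat.mul_le_mul_left _ (Nat.mul_le_mul_left _ hbig')
            _ = 3 ^ (n'/2) * C * L n' k := (mul_assoc _ _ _).symm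
            _ ≤ 3 ^ n' * C * L n' k := by
                refine Nat.mul_le_mul_right _ (Nat.mul_le_mul_right _ ?_)
                exact Nat.pow_le_pow_right (by omega) (by omega)
        -- combine
        refine ⟨C + 2 + P * C ^ n' + 3 ^ n' * C, by omega, ?_⟩
        intro j hj k hk
        rcases Nat.lt_or_ge j n' with hj' | hj'
        · obtain ⟨hl, hu⟩ := hC j (by omega) k hk
          constructor
          · calc k ^ (j/2) ≤ C * L j k := hl
              _ ≤ (C + 2 + P * C ^ n' + 3 ^ n' * C) * L j k :=
                  Nat.mul_le_mul_right _ (by omega)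
          · calc L j k ≤ C * k ^ (j/2) := hu
              _ ≤ (C + 2 + P * C ^ n' + 3 ^ n' * C) * k ^ (j/2) :=
                  Nat.mul_le_mul_right _ (by omega)
        · have hje : j = n' := by omega
          subst hje
          constructor
          · calc k ^ (n'/2) ≤ 3 ^ n' * C * L n' k := hlow k hk
              _ ≤ (C + 2 + P * C ^ n' + 3 ^ n' * C) * L n' k :=
                  Nat.mul_le_mul_right _ (by omega)
          · calc L n' k ≤ (2 + P * C ^ n') * k ^ (n'/2) := hup k hk
              _ ≤ (C + 2 + P * C ^ n' + 3 ^ n' * C) * k ^ (n'/2) :=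
                  Nat.mul_le_mul_right _ (by omega)
  obtain ⟨C, hC1, hC⟩ := main n
  have hCpos : (0:ℝ) < C := by exact_mod_cast hC1
  refine ⟨1 / (C:ℝ), C, one_div_pos.mpr hCpos, hCpos, ?_⟩
  intro k hk
  obtain ⟨hl, hu⟩ := hC n le_rfl k hk
  have hl' : ((k:ℝ))^(n/2) ≤ (C:ℝ) * (L n k : ℝ) := by exact_mod_cast hl
  have hu' : ((L n k : ℝ)) ≤ (C:ℝ) * (k:ℝ)^(n/2) := by exact_mod_cast hu
  constructor
  · rw [div_mul_eq_mul_div, one_mul, div_le_iff₀ hCpos]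
    linarith
  · exact hu'
end

section
/- Define L(n, k) by the recursion above. Then for fixed n, L(n, k) / k^{⌊n/2⌋} converges as k → ∞ to a_{⌊(n+1)/2⌋} / ⌊n/2⌋!, where a_i are the telephone numbers (a_0 = a_1 = 1, a_i = a_{i-1} + (i-1)a_{i-2}). -/
open Filter Finset Asymptotics Topology

/- By Faulhaber's formula the ratio is a polynomial in `1 / k` with constant term `1 / (D + 1)`. -/
lemma tendsto_sum_range_pow_div_pow_succ (D : ℕ) :
    Tendsto (fun k : ℕ => (∑ m ∈ range k, (m : ℝ) ^ D) / (k : ℝ) ^ (D + 1)) atTop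
      (𝓝 (1 / (D + 1))) := by
  set c : ℕ → ℝ := fun i => ((bernoulli i * (D + 1).choose i : ℚ) : ℝ)
  have hfaulhaber : ∀ k : ℕ, ∑ m ∈ range k, (m : ℝ) ^ D
      = ∑ i ∈ range (D + 1), c i * (k : ℝ) ^ (D + 1 - i) / (D + 1) := by
    intro k
    have h := congrArg (fun q : ℚ => (q : ℝ)) (sum_range_pow k D)
    push_cast at h
    convert h using 2
    simp [c]
  set p : ℝ → ℝ := fun x => ∑ i ∈ range (D + 1), c i * x ^ i / (D + 1)
  have hp0 : p 0 = 1 / (D + 1) := by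
    simp only [p]
    rw [Finset.sum_eq_single 0 (fun i _ hi => by simp [zero_pow hi]) (by simp)]
    simp [c]
  have hp : Tendsto (fun k : ℕ => p (1 / k)) atTop (𝓝 (1 / (D + 1))) :=
    hp0 ▸ ((by fun_prop : Continuous p).tendsto 0).comp tendsto_one_div_atTop_nhds_zero_nat
  refine hp.congr' ?_
  filter_upwards [eventually_ge_atTop 1] with k hk
  have hk0 : (k : ℝ) ≠ 0 := by positivity
  rw [hfaulhaber, Finset.sum_div]
  refine Finset.sum_congr rfl fun i hi => ?_
  have hsplit : (k : ℝ) ^ (D + 1) = k ^ (D + 1 - i) * k ^ i := by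
    rw [← pow_add, Nat.sub_add_cancel (Finset.mem_range.mp hi).le]
  rw [hsplit, one_div, inv_pow]
  field_simp

lemma tendsto_div_pow_of_lt {f : ℕ → ℝ} {e d : ℕ} {c : ℝ} (hed : e < d)
    (h : Tendsto (fun k : ℕ => f k / (k : ℝ) ^ e) atTop (𝓝 c)) :
    Tendsto (fun k : ℕ => f k / (k : ℝ) ^ d) atTop (𝓝 0) := by
  have hsmall : Tendsto (fun k : ℕ => (1 / (k : ℝ)) ^ (d - e)) atTop (𝓝 0) := by
    simpa [zero_pow (Nat.sub_ne_zero_of_lt hed)] using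
      (tendsto_one_div_atTop_nhds_zero_nat (𝕜 := ℝ)).pow (d - e)
  have hprod := h.mul hsmall
  rw [mul_zero] at hprod
  refine hprod.congr' ?_
  filter_upwards [eventually_ge_atTop 1] with k hk
  have hk0 : (k : ℝ) ≠ 0 := by positivity
  have hsplit : (k : ℝ) ^ d = k ^ e * k ^ (d - e) := by
    rw [← pow_add, Nat.add_sub_cancel' hed.le]
  rw [hsplit, one_div, inv_pow]
  field_simp

lemma tendsto_sum_range_div_pow_succ {f : ℕ → ℝ} {D : ℕ} {c : ℝ}
    (h : Tendsto (fun m : ℕ => f m / (m : ℝ) ^ D) atTop (𝓝 c)) :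
    Tendsto (fun k : ℕ => (∑ m ∈ range k, f m) / (k : ℝ) ^ (D + 1)) atTop
      (𝓝 (c / (D + 1))) := by
  have hpos : ∀ᶠ m : ℕ in atTop, (m : ℝ) ^ D ≠ 0 := by
    filter_upwards [eventually_ge_atTop 1] with m hm
    positivity
  have herr : (fun m : ℕ => f m - c * (m : ℝ) ^ D) =o[atTop] fun m : ℕ => (m : ℝ) ^ D := by
    rw [isLittleO_iff_tendsto' (hpos.mono fun m hm h0 => absurd h0 hm)]
    refine (sub_self c ▸ h.sub_const c).congr' ?_
    filter_upwards [hpos] with m hm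
    field_simp
  have hfaulhaber := tendsto_sum_range_pow_div_pow_succ D
  have hpow : Tendsto (fun k : ℕ => (k : ℝ) ^ (D + 1)) atTop atTop :=
    (tendsto_pow_atTop (Nat.succ_ne_zero D)).comp tendsto_natCast_atTop_atTop
  have hbig : (fun k : ℕ => ∑ m ∈ range k, (m : ℝ) ^ D) =O[atTop]
      fun k : ℕ => (k : ℝ) ^ (D + 1) := by
    refine isBigO_of_div_tendsto_nhds (Eventually.of_forall fun k hk => ?_) _ hfaulhaber
    rcases k with _ | k
    · simp
    · exact absurd hk (by positivity)
  have hinf : Tendsto (fun k : ℕ => ∑ m ∈ range k, (m : ℝ) ^ D) atTop atTop := by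
    refine (hfaulhaber.pos_mul_atTop (by positivity) hpow).congr' ?_
    filter_upwards [eventually_ge_atTop 1] with k hk
    have hk0 : (k : ℝ) ≠ 0 := by positivity
    field_simp
  have hsum := ((herr.sum_range (fun m => by positivity) hinf).trans_isBigO hbig)
    |>.tendsto_div_nhds_zero
  have hlim := (hfaulhaber.const_mul c).add hsum
  rw [add_zero, ← div_eq_mul_one_div] at hlim
  refine hlim.congr fun k => ?_
  rw [Finset.sum_sub_distrib, ← Finset.mul_sum]
  ring

@[to_additive]
lemma prod_Icc_sup_count_eq {M : Type*} [CommMonoid M] {f : ℕ → ℕ → M} (hf : ∀ i, f i 0 = 1)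
    {s : Multiset ℕ} {N : ℕ} (hN : s.sup ≤ N) :
    ∏ i ∈ Icc 1 s.sup, f i (s.count i) = ∏ i ∈ Icc 1 N, f i (s.count i) := by
  refine prod_subset (Icc_subset_Icc_right hN) fun i hiN hi => ?_
  have hi : i ∉ s := fun hs =>
    hi (Finset.mem_Icc.mpr ⟨(Finset.mem_Icc.mp hiN).1, Multiset.le_sup hs⟩)
  rw [Multiset.count_eq_zero_of_notMem hi, hf]

def numPairs (s : Multiset ℕ) : ℕ := ∑ i ∈ Icc 1 s.sup, s.count i / 2

def pairDefect (s : Multiset ℕ) : ℕ :=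
  ∑ i ∈ Icc 1 s.sup, ((i - 1) * s.count i + s.count i % 2)

def onesTwosThrees (x b c : ℕ) : Multiset ℕ :=
  Multiset.replicate x 1 + Multiset.replicate b 2 + Multiset.replicate c 3

lemma eq_onesTwosThrees_count {s : Multiset ℕ} (hs : ∀ p ∈ s, 1 ≤ p ∧ p ≤ 3) :
    s = onesTwosThrees (s.count 1) (s.count 2) (s.count 3) := by
  ext a
  simp only [onesTwosThrees, Multiset.count_add, Multiset.count_replicate]
  by_cases ha : a = 1 ∨ a = 2 ∨ a = 3
  · rcases ha with rfl | rfl | rfl <;> simp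
  · have : a ∉ s := fun h => ha (by have := hs a h; omega)
    rw [Multiset.count_eq_zero_of_notMem this]
    split_ifs <;> omega

section onesTwosThrees
variable (x b c : ℕ)

@[simp] lemma count_one_onesTwosThrees : (onesTwosThrees x b c).count 1 = x := by
  simp [onesTwosThrees, Multiset.count_replicate]
@[simp] lemma count_two_onesTwosThrees : (onesTwosThrees x b c).count 2 = b := by
  simp [onesTwosThrees, Multiset.count_replicate]
@[simp] lemma count_three_onesTwosThrees : (onesTwosThrees x b c).count 3 = c := by
  simp [onesTwosThrees, Multiset.count_replicate]

lemma sum_onesTwosThrees : (onesTwosThrees x b c).sum = x + 2 * b + 3 * c := by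
  simp [onesTwosThrees, mul_comm]

lemma mem_onesTwosThrees {p : ℕ} (hp : p ∈ onesTwosThrees x b c) : 1 ≤ p ∧ p ≤ 3 := by
  simp only [onesTwosThrees, Multiset.mem_add, Multiset.mem_replicate] at hp
  omega

@[to_additive]
lemma prod_Icc_sup_onesTwosThrees {M : Type*} [CommMonoid M] {f : ℕ → ℕ → M}
    (hf : ∀ i, f i 0 = 1) :
    ∏ i ∈ Icc 1 (onesTwosThrees x b c).sup, f i ((onesTwosThrees x b c).count i)
      = f 1 x * f 2 b * f 3 c := by
  rw [prod_Icc_sup_count_eq hf (N := 3)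
    (Multiset.sup_le.mpr fun p hp => (mem_onesTwosThrees x b c hp).2),
    show Finset.Icc 1 3 = {1, 2, 3} by decide]
  simp [mul_assoc]

lemma numPairs_onesTwosThrees : numPairs (onesTwosThrees x b c) = x / 2 + b / 2 + c / 2 :=
  sum_Icc_sup_onesTwosThrees x b c (f := fun _ n => n / 2) fun _ => rfl

end onesTwosThrees

namespace Nat.Partition

variable {n : ℕ} (α : n.Partition)

lemma two_mul_numPairs_add_pairDefect : 2 * numPairs α.parts + pairDefect α.parts = n := by
  have hsum : ∑ i ∈ Icc 1 α.parts.sup, α.parts.count i • i = n := by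
    refine (sum_multiset_count_of_subset _ _ fun i hi => ?_).symm.trans α.parts_sum
    rw [Multiset.mem_toFinset] at hi
    exact Finset.mem_Icc.mpr ⟨α.parts_pos hi, Multiset.le_sup hi⟩
  refine Eq.trans ?_ hsum
  rw [numPairs, pairDefect, mul_sum, ← sum_add_distrib]
  refine sum_congr rfl fun i hi => ?_
  obtain ⟨j, rfl⟩ : ∃ j, i = j + 1 := ⟨i - 1, by have := (Finset.mem_Icc.mp hi).1; omega⟩
  rw [smul_eq_mul, Nat.add_sub_cancel]
  linarith [Nat.div_add_mod (α.parts.count (j + 1)) 2]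

lemma le_pairDefect {i : ℕ} (hi : i ∈ α.parts) :
    (i - 1) * α.parts.count i + α.parts.count i % 2 ≤ pairDefect α.parts :=
  single_le_sum (f := fun i => (i - 1) * α.parts.count i + α.parts.count i % 2)
    (fun _ _ => Nat.zero_le _) (Finset.mem_Icc.mpr ⟨α.parts_pos hi, Multiset.le_sup hi⟩)

lemma exists_two_le_of_ne_replicate (h : α.parts ≠ Multiset.replicate n 1) :
    ∃ p ∈ α.parts, 2 ≤ p := by
  by_contra! hp
  have hs := Multiset.eq_replicate_card.mpr fun p hp' =>
    le_antisymm (Nat.le_of_lt_succ (hp p hp')) (α.parts_pos hp')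
  have hcard : Multiset.card α.parts = n := by
    have := α.parts_sum
    rw [hs] at this
    simpa using this
  exact h (by rw [hs, hcard])

lemma numPairs_add_one_le (h : α.parts ≠ Multiset.replicate n 1) :
    numPairs α.parts + 1 ≤ n / 2 := by
  obtain ⟨p, hp, hp2⟩ := α.exists_two_le_of_ne_replicate h
  have hcount := Multiset.one_le_count_iff_mem.mpr hp
  have : 1 * α.parts.count p ≤ (p - 1) * α.parts.count p := Nat.mul_le_mul_right _ (by omega)
  have := α.le_pairDefect hp
  have := α.two_mul_numPairs_add_pairDefect
  omega

lemma count_lt (h : α.parts ≠ Multiset.replicate n 1) (i : ℕ) : α.parts.count i < n := by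
  obtain ⟨p, hp, hp2⟩ := α.exists_two_le_of_ne_replicate h
  obtain ⟨t, ht⟩ := Multiset.exists_cons_of_mem hp
  have hsum := α.parts_sum
  have hcard : Multiset.card t ≤ t.sum := by
    simpa using Multiset.card_nsmul_le_sum (s := t) (a := 1) fun x hx =>
      α.parts_pos (ht ▸ Multiset.mem_cons_of_mem hx)
  rw [ht, Multiset.sum_cons] at hsum
  calc α.parts.count i ≤ Multiset.card α.parts := Multiset.count_le_card _ _
    _ = Multiset.card t + 1 := by rw [ht, Multiset.card_cons]
    _ < n := by omega

lemma le_three_and_counts_mem (h : α.parts ≠ Multiset.replicate n 1)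
    (hn : n ≤ 2 * numPairs α.parts + 3) :
    (∀ p ∈ α.parts, p ≤ 3) ∧ (α.parts.count 2, α.parts.count 3) ∈
      ({(1, 0), (2, 0), (0, 1)} : Finset (ℕ × ℕ)) := by
  have hdefect : pairDefect α.parts ≤ 3 := by
    have := α.two_mul_numPairs_add_pairDefect
    omega
  have hle : ∀ p ∈ α.parts, p ≤ 3 := fun p hp => by
    by_contra! hp4
    have hcount := Multiset.one_le_count_iff_mem.mpr hp
    have : 3 * α.parts.count p ≤ (p - 1) * α.parts.count p := Nat.mul_le_mul_right _ (by omega)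
    have := α.le_pairDefect hp
    omega
  have h23 : (2 - 1) * α.parts.count 2 + α.parts.count 2 % 2
      + ((3 - 1) * α.parts.count 3 + α.parts.count 3 % 2) ≤ 3 := by
    rw [pairDefect, sum_Icc_sup_count_eq (f := fun i c => (i - 1) * c + c % 2) (by simp)
      (le_max_left _ 3)] at hdefect
    rw [← sum_pair (f := fun i => (i - 1) * α.parts.count i + α.parts.count i % 2) (by decide)]
    refine le_trans (sum_le_sum_of_subset ?_) hdefect
    intro i hi
    simp only [Finset.mem_insert, Finset.mem_singleton] at hi
    rw [Finset.mem_Icc]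
    omega
  obtain ⟨p, hp, hp2⟩ := α.exists_two_le_of_ne_replicate h
  have h23pos : 1 ≤ α.parts.count 2 ∨ 1 ≤ α.parts.count 3 := by
    obtain rfl | rfl : p = 2 ∨ p = 3 := by have := hle p hp; omega
    exacts [Or.inl (Multiset.one_le_count_iff_mem.mpr hp),
      Or.inr (Multiset.one_le_count_iff_mem.mpr hp)]
  refine ⟨hle, ?_⟩
  simp only [Finset.mem_insert, Finset.mem_singleton, Prod.mk.injEq]
  omega

lemma parts_eq_onesTwosThrees (hle : ∀ p ∈ α.parts, p ≤ 3) :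
    α.parts = onesTwosThrees (n - 2 * α.parts.count 2 - 3 * α.parts.count 3)
      (α.parts.count 2) (α.parts.count 3) ∧ 2 * α.parts.count 2 + 3 * α.parts.count 3 ≤ n := by
  have hs := eq_onesTwosThrees_count fun p hp => ⟨α.parts_pos hp, hle p hp⟩
  have hsum := α.parts_sum
  rw [hs, sum_onesTwosThrees] at hsum
  refine ⟨hs.trans ?_, by omega⟩
  congr 1
  omega

lemma sum_filter_ne_replicate {M : Type*} [AddCommMonoid M] (hn : 2 ≤ n)
    (F : n.Partition → M) :
    ∑ α ∈ univ.filter (fun α : n.Partition => α.parts ≠ Multiset.replicate n 1), F α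
      = F (indiscrete n) + ∑ α ∈ univ.filter (fun α : n.Partition =>
          α.parts ≠ {n} ∧ α.parts ≠ Multiset.replicate n 1), F α := by
  have hne : ({n} : Multiset ℕ) ≠ Multiset.replicate n 1 := fun h => by
    have := congrArg (Multiset.count n) h
    rw [Multiset.count_singleton_self, Multiset.count_replicate, if_neg (by omega)] at this
    omega
  rw [← add_sum_erase _ _ (mem_filter.mpr ⟨mem_univ _, by rwa [indiscrete_parts (by omega)]⟩)]
  congr 2
  ext α
  simp only [mem_erase, mem_filter, mem_univ, true_and, ne_eq, Nat.Partition.ext_iff,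
    indiscrete_parts (show n ≠ 0 by omega)]

end Nat.Partition

noncomputable def telephoneCoeff (n : ℕ) : ℝ := telephone ((n + 1) / 2) / (n / 2).factorial

@[simp] lemma telephoneCoeff_zero : telephoneCoeff 0 = 1 := by simp [telephoneCoeff, telephone]
@[simp] lemma telephoneCoeff_one : telephoneCoeff 1 = 1 := by simp [telephoneCoeff, telephone]
@[simp] lemma telephoneCoeff_two : telephoneCoeff 2 = 1 := by simp [telephoneCoeff, telephone]

lemma telephoneCoeff_even (j : ℕ) :
    telephoneCoeff (2 * j + 4) * (j + 2) = telephoneCoeff (2 * j + 2) + telephoneCoeff (2 * j) := by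
  simp only [telephoneCoeff, show (2 * j + 4 + 1) / 2 = j + 2 by omega,
    show (2 * j + 4) / 2 = j + 2 by omega, show (2 * j + 2 + 1) / 2 = j + 1 by omega,
    show (2 * j + 2) / 2 = j + 1 by omega, show (2 * j + 1) / 2 = j by omega,
    show 2 * j / 2 = j by omega, telephone, Nat.factorial_succ]
  field_simp
  push_cast
  ring

lemma telephoneCoeff_odd (j : ℕ) :
    telephoneCoeff (2 * j + 5) * (j + 2)
      = telephoneCoeff (2 * j + 3) + telephoneCoeff (2 * j + 1) + telephoneCoeff (2 * j + 2) := by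
  simp only [telephoneCoeff, show (2 * j + 5 + 1) / 2 = j + 1 + 2 by omega,
    show (2 * j + 5) / 2 = j + 2 by omega, show (2 * j + 3 + 1) / 2 = j + 2 by omega,
    show (2 * j + 3) / 2 = j + 1 by omega, show (2 * j + 2) / 2 = j + 1 by omega,
    show (2 * j + 1) / 2 = j by omega, telephone, Nat.factorial_succ]
  field_simp
  push_cast
  ring

/- The coefficient of `k ^ d` in `∑_{m<k} ∏ i, L (s.count i) m` when
`L j m ~ telephoneCoeff j * m ^ (j / 2)` for every multiplicity `j`. -/
noncomputable def partitionCoeff (d : ℕ) (s : Multiset ℕ) : ℝ :=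
  if numPairs s + 1 = d then (∏ i ∈ Icc 1 s.sup, telephoneCoeff (s.count i)) / d else 0

lemma partitionCoeff_onesTwosThrees (d x b c : ℕ) :
    partitionCoeff d (onesTwosThrees x b c) = if x / 2 + b / 2 + c / 2 + 1 = d then
      telephoneCoeff x * telephoneCoeff b * telephoneCoeff c / d else 0 := by
  rw [partitionCoeff, numPairs_onesTwosThrees,
    prod_Icc_sup_onesTwosThrees (f := fun _ => telephoneCoeff) x b c fun _ => telephoneCoeff_zero]

lemma sum_partitionCoeff_eq_sum_counts (n : ℕ) :
    ∑ α ∈ univ.filter (fun α : n.Partition => α.parts ≠ Multiset.replicate n 1),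
      partitionCoeff (n / 2) α.parts
      = ∑ bc ∈ ({(1, 0), (2, 0), (0, 1)} : Finset (ℕ × ℕ)), if 2 * bc.1 + 3 * bc.2 ≤ n then
          partitionCoeff (n / 2) (onesTwosThrees (n - 2 * bc.1 - 3 * bc.2) bc.1 bc.2) else 0 := by
  have hsupport : ∀ α : n.Partition, α.parts ≠ Multiset.replicate n 1 →
      partitionCoeff (n / 2) α.parts ≠ 0 → (∀ p ∈ α.parts, p ≤ 3) ∧
        (α.parts.count 2, α.parts.count 3) ∈ ({(1, 0), (2, 0), (0, 1)} : Finset (ℕ × ℕ)) := by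
    intro α hα hne
    refine α.le_three_and_counts_mem hα ?_
    rw [partitionCoeff, ite_ne_right_iff] at hne
    omega
  refine sum_bij_ne_zero (fun α _ _ => (α.parts.count 2, α.parts.count 3)) ?_ ?_ ?_ ?_
  · exact fun α hα hne => (hsupport α (mem_filter.mp hα).2 hne).2
  · intro α₁ hα₁ hne₁ α₂ hα₂ hne₂ hcounts
    rw [Prod.mk.injEq] at hcounts
    ext1
    rw [(α₁.parts_eq_onesTwosThrees (hsupport α₁ (mem_filter.mp hα₁).2 hne₁).1).1,
      (α₂.parts_eq_onesTwosThrees (hsupport α₂ (mem_filter.mp hα₂).2 hne₂).1).1,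
      hcounts.1, hcounts.2]
  · rintro ⟨b, c⟩ hbc hne
    obtain ⟨hle, hne⟩ := ite_ne_right_iff.mp hne
    let α : n.Partition := ⟨onesTwosThrees (n - 2 * b - 3 * c) b c,
      fun hp => (mem_onesTwosThrees _ _ _ hp).1, by rw [sum_onesTwosThrees]; omega⟩
    refine ⟨α, mem_filter.mpr ⟨mem_univ _, fun h => ?_⟩, hne, by simp [α]⟩
    have h2 := congrArg (Multiset.count 2) h
    have h3 := congrArg (Multiset.count 3) h
    simp only [α, count_two_onesTwosThrees, count_three_onesTwosThrees,
      Multiset.count_replicate] at h2 h3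
    simp only [Finset.mem_insert, Finset.mem_singleton, Prod.mk.injEq] at hbc
    split_ifs at h2 h3 <;> omega
  · intro α hα hne
    obtain ⟨hparts, hle⟩ := α.parts_eq_onesTwosThrees (hsupport α (mem_filter.mp hα).2 hne).1
    rw [if_pos hle, ← hparts]

lemma sum_counts_partitionCoeff {n : ℕ} (hn : 2 ≤ n) :
    ∑ bc ∈ ({(1, 0), (2, 0), (0, 1)} : Finset (ℕ × ℕ)), (if 2 * bc.1 + 3 * bc.2 ≤ n then
      partitionCoeff (n / 2) (onesTwosThrees (n - 2 * bc.1 - 3 * bc.2) bc.1 bc.2) else 0)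
      = telephoneCoeff n := by
  rw [sum_insert (by decide), sum_insert (by decide), Finset.sum_singleton]
  simp only [partitionCoeff_onesTwosThrees, telephoneCoeff_zero, telephoneCoeff_one,
    telephoneCoeff_two, mul_one]
  obtain ⟨j, rfl | rfl⟩ | rfl | rfl : (∃ j, n = 2 * j + 4 ∨ n = 2 * j + 5) ∨ n = 2 ∨ n = 3 := by
    rcases lt_or_ge n 4 with h | h
    · omega
    · exact Or.inl ⟨(n - 4) / 2, by omega⟩
  · have hd : (2 * j + 4) / 2 = j + 2 := by omega
    split_ifs <;> try omega
    simp only [hd, Nat.reduceMul, Nat.reduceSubDiff, Nat.sub_zero, add_zero]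
    push_cast
    field_simp
    linarith [telephoneCoeff_even j]
  · have hd : (2 * j + 5) / 2 = j + 2 := by omega
    split_ifs <;> try omega
    simp only [hd, Nat.reduceMul, Nat.reduceSubDiff, Nat.sub_zero]
    push_cast
    field_simp
    linarith [telephoneCoeff_odd j]
  · norm_num
  · norm_num [telephoneCoeff, telephone]

lemma sum_range_prod_count_indiscrete {L : ℕ → ℕ → ℕ} (h0 : ∀ k, L 0 k = 1)
    (h1 : ∀ k, L 1 k = 1) {n : ℕ} (hn : n ≠ 0) (k : ℕ) :
    ∑ m ∈ range k, ∏ i ∈ Icc 1 (Nat.Partition.indiscrete n).parts.sup,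
      L ((Nat.Partition.indiscrete n).parts.count i) m = k := by
  rw [Nat.Partition.indiscrete_parts hn]
  refine (sum_congr rfl fun m _ => prod_eq_one fun i _ => ?_).trans (by simp)
  rw [Multiset.count_singleton]
  split_ifs
  exacts [h1 m, h0 m]

lemma tendsto_sum_range_prod_div_pow {L : ℕ → ℕ → ℕ} {n : ℕ}
    (ih : ∀ j < n, Tendsto (fun k : ℕ => (L j k : ℝ) / (k : ℝ) ^ (j / 2)) atTop
      (𝓝 (telephoneCoeff j)))
    (α : n.Partition) (hα : α.parts ≠ Multiset.replicate n 1) :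
    Tendsto (fun k : ℕ => (∑ m ∈ range k, ∏ i ∈ Icc 1 α.parts.sup,
        (L (α.parts.count i) m : ℝ)) / (k : ℝ) ^ (n / 2)) atTop
      (𝓝 (partitionCoeff (n / 2) α.parts)) := by
  have hprod : Tendsto (fun m : ℕ => (∏ i ∈ Icc 1 α.parts.sup, (L (α.parts.count i) m : ℝ))
      / (m : ℝ) ^ numPairs α.parts) atTop
      (𝓝 (∏ i ∈ Icc 1 α.parts.sup, telephoneCoeff (α.parts.count i))) := by
    refine (tendsto_finsetProd _ fun i _ => ih _ (α.count_lt hα i)).congr fun m => ?_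
    rw [prod_div_distrib, prod_pow_eq_pow_sum, numPairs]
  have hsum := tendsto_sum_range_div_pow_succ hprod
  rw [partitionCoeff]
  obtain heq | hlt := (α.numPairs_add_one_le hα).eq_or_lt
  · rw [if_pos heq, ← heq]
    exact_mod_cast hsum
  · rw [if_neg hlt.ne]
    exact tendsto_div_pow_of_lt hlt hsum

theorem stmt_10 (L : ℕ → ℕ → ℕ)
    (h0 : ∀ k, L 0 k = 1) (h1 : ∀ k, L 1 k = 1)
    (hrec : ∀ n k, 2 ≤ n → L n k = 1 + k +
      ∑ α ∈ Finset.univ.filter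
          (fun α : Nat.Partition n => α.parts ≠ {n} ∧ α.parts ≠ Multiset.replicate n 1),
        ∑ m ∈ Finset.range k,
          ∏ i ∈ Finset.Icc 1 (α.parts.sup), L (Multiset.count i α.parts) m)
    (n : ℕ) :
    Filter.Tendsto (fun k : ℕ => (L n k : ℝ) / (k : ℝ) ^ (n / 2)) Filter.atTop
      (nhds ((telephone ((n + 1) / 2) : ℝ) / (Nat.factorial (n / 2) : ℝ))) := by
  induction n using Nat.strong_induction_on with
  | _ n ih =>
  obtain hn | hn := lt_or_ge n 2
  · interval_cases n <;> simp [h0, h1, telephone]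
  have hL : ∀ k, L n k = 1 + ∑ α ∈ univ.filter (fun α : n.Partition =>
      α.parts ≠ Multiset.replicate n 1), ∑ m ∈ range k, ∏ i ∈ Icc 1 α.parts.sup,
        L (α.parts.count i) m := fun k => by
    rw [hrec n k hn, Nat.Partition.sum_filter_ne_replicate hn,
      sum_range_prod_count_indiscrete h0 h1 (by omega), add_assoc]
  have hone : Tendsto (fun k : ℕ => 1 / (k : ℝ) ^ (n / 2)) atTop (𝓝 0) :=
    tendsto_div_pow_of_lt (f := fun _ => 1) (e := 0) (c := 1) (by omega) (by simp)
  have hsum := tendsto_finsetSum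
    (univ.filter fun α : n.Partition => α.parts ≠ Multiset.replicate n 1) fun α hα =>
    tendsto_sum_range_prod_div_pow ih α (mem_filter.mp hα).2
  rw [sum_partitionCoeff_eq_sum_counts, sum_counts_partitionCoeff hn] at hsum
  refine (zero_add (telephoneCoeff n) ▸ hone.add hsum).congr fun k => ?_
  rw [hL]
  push_cast
  rw [add_div, sum_div]
end
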